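/- arXiv:1108.5505 — 3 statements merged into one kernel-verified Lean document; each statement's English description precedes it below -/
import Mathlib

section
/- Let β ∈ KL satisfy the semigroup property β(s, t₁+t₂) = β(β(s,t₁), t₂), and let (t_j)_{j≥0} with t_0 = 0 be an increasing sequence. Suppose a nonnegative function R defined on a hybrid time domain satisfies R(t, j) ≤ β(R(t_j, j), t − t_j) for t_j ≤ t ≤ t_{j+1}, and R(t_{j+1}, j+1) ≤ R(t_{j+1}, j) for all j. Then R(t, j) ≤ β(R(0,0), t) for all (t,j) in the domain. -/
/-- Class-KL function. -/
def ClassKL (β : ℝ → ℝ → ℝ) : Prop :=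
  Continuous (fun p : ℝ × ℝ => β p.1 p.2) ∧
    (∀ t ≥ (0:ℝ), StrictMonoOn (fun s => β s t) (Set.Ici 0) ∧ β 0 t = 0) ∧
    ∀ s > (0:ℝ), AntitoneOn (β s) (Set.Ici 0) ∧
      Filter.Tendsto (β s) Filter.atTop (nhds 0)

/-!
Along the flow the bound `β (R (t j) j) (s - t j)` is propagated from one jump time to the next:
since jumps do not increase `R` and `β` is increasing in its first argument, the semigroup
property `β (β r a) u = β r (a + u)` merges the bound of interval `j` into that of interval
`j + 1`. By induction the state at every jump time is controlled by `β (R 0 0)` evaluated at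
the total elapsed time.
-/

open Set

namespace ClassKL

variable {β : ℝ → ℝ → ℝ}

theorem monotoneOn_left (hβ : ClassKL β) {u : ℝ} (hu : 0 ≤ u) :
    MonotoneOn (fun s => β s u) (Ici 0) :=
  (hβ.2.1 u hu).1.monotoneOn

theorem nonneg (hβ : ClassKL β) {s u : ℝ} (hs : 0 ≤ s) (hu : 0 ≤ u) : 0 ≤ β s u := by
  simpa only [(hβ.2.1 u hu).2] using hβ.monotoneOn_left hu self_mem_Ici hs hs

theorem apply_le_of_le_step (hβ : ClassKL β)
    (hsg : ∀ s ≥ (0:ℝ), ∀ t₁ ≥ (0:ℝ), ∀ t₂ ≥ (0:ℝ), β s (t₁ + t₂) = β (β s t₁) t₂)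
    {t : ℕ → ℝ} (ht : Monotone t) {x : ℕ → ℝ} (hx : ∀ j, 0 ≤ x j)
    (hstep : ∀ j, x (j + 1) ≤ β (x j) (t (j + 1) - t j)) :
    ∀ j, ∀ u ≥ (0:ℝ), β (x j) u ≤ β (x 0) (t j - t 0 + u) := by
  intro j
  induction j with
  | zero => intro u _; rw [sub_self, zero_add]
  | succ j ih =>
    intro u hu
    have hgap : 0 ≤ t (j + 1) - t j := sub_nonneg.2 (ht j.le_succ)
    calc β (x (j + 1)) u ≤ β (β (x j) (t (j + 1) - t j)) u :=
          hβ.monotoneOn_left hu (hx _) (hβ.nonneg (hx j) hgap) (hstep j)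
      _ = β (x j) (t (j + 1) - t j + u) := (hsg _ (hx j) _ hgap _ hu).symm
      _ ≤ β (x 0) (t j - t 0 + (t (j + 1) - t j + u)) := ih _ (add_nonneg hgap hu)
      _ = β (x 0) (t (j + 1) - t 0 + u) := by ring_nf

end ClassKL

/-- concatenating per-interval KL bounds across jumps. If
R(t,j) ≤ β(R(t_j,j), t−t_j) on each interval [t_j, t_{j+1}], R does not increase
at jumps, and β is class-KL with the semigroup property, then
R(t,j) ≤ β(R(0,0), t) on the whole hybrid time domain. -/
theorem stmt9 (β : ℝ → ℝ → ℝ) (hβ : ClassKL β)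
    (hsg : ∀ s ≥ (0:ℝ), ∀ t₁ ≥ (0:ℝ), ∀ t₂ ≥ (0:ℝ), β s (t₁ + t₂) = β (β s t₁) t₂)
    (t : ℕ → ℝ) (ht0 : t 0 = 0) (htmono : Monotone t)
    (R : ℝ → ℕ → ℝ) (hRpos : ∀ s j, 0 ≤ R s j)
    (hflow : ∀ j : ℕ, ∀ s : ℝ, t j ≤ s → s ≤ t (j + 1) → R s j ≤ β (R (t j) j) (s - t j))
    (hjump : ∀ j : ℕ, R (t (j + 1)) (j + 1) ≤ R (t (j + 1)) j) :
    ∀ j : ℕ, ∀ s : ℝ, t j ≤ s → s ≤ t (j + 1) → R s j ≤ β (R 0 0) s := by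
  have hchain := hβ.apply_le_of_le_step hsg htmono (x := fun j => R (t j) j) (fun j => hRpos _ _)
    fun j => (hjump j).trans (hflow j _ (htmono j.le_succ) le_rfl)
  intro j s hjs hsj
  calc R s j ≤ β (R (t j) j) (s - t j) := hflow j s hjs hsj
    _ ≤ β (R (t 0) 0) (t j - t 0 + (s - t j)) := hchain j _ (sub_nonneg.2 hjs)
    _ = β (R 0 0) s := by rw [ht0]; ring_nf
end

section
/- For the round-robin protocol with l nodes, where at step κ the block e_{(κ mod l)+1} is set to zero and other blocks are unchanged, there exists ρ ∈ [0,1) and a function W : ℤ≥0 × ℝ^{n} → ℝ≥0 (e.g. W(κ,e) = sqrt(Σᵢ aᵢ(κ)|eᵢ|²) with suitable positive weights aᵢ(κ) periodic in κ) satisfying α(|e|) ≤ W(κ,e) ≤ ᾱ(|e|) for class-K∞ α, ᾱ, and W(κ+1, h(κ,e)) ≤ ρ·W(κ,e) for all κ, e. -/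
/-!
Weight the squared norm of block `i` by `2 ^ d`, where `d < l` is the number of steps until
node `i` is next served. After one step every unserved block is one step closer to service,
so its weight halves, while the served block is zeroed; hence the weighted norm contracts
by `√(1/2)`. Since `1 ≤ 2 ^ d ≤ 2 ^ (l - 1)`, it is squeezed between `|e|` and
`√(2 ^ (l - 1)) |e|`.
-/

open scoped BigOperators

/-- Class-K∞ function. -/
def ClassKInf (f : ℝ → ℝ) : Prop :=
  Continuous f ∧ StrictMono f ∧ f 0 = 0 ∧ Filter.Tendsto f Filter.atTop Filter.atTop

lemma classKInf_const_mul {c : ℝ} (hc : 0 < c) : ClassKInf (fun r => c * r) :=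
  ⟨continuous_const.mul continuous_id, fun _ _ h => mul_lt_mul_of_pos_left h hc, mul_zero c,
    Filter.tendsto_id.const_mul_atTop hc⟩

lemma ZMod.val_sub_one_add_one_of_ne_zero {n : ℕ} [NeZero n] {x : ZMod n} (hx : x ≠ 0) :
    (x - 1).val + 1 = x.val := by
  have hpos : 1 ≤ x.val := ZMod.val_pos.mpr hx
  have hlt : x.val - 1 < n := (Nat.sub_le _ _).trans_lt x.val_lt
  have hcast : x - 1 = ((x.val - 1 : ℕ) : ZMod n) := by
    push_cast [Nat.cast_sub hpos]
    rw [ZMod.natCast_zmod_val]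
  rw [hcast, ZMod.val_cast_of_lt hlt]
  omega

section WeightedNorm

variable {ι : Type*} [Fintype ι] {E : ι → Type*}

noncomputable def weightedNorm [∀ i, Norm (E i)] (w : ι → ℕ) (e : ∀ i, E i) : ℝ :=
  √(∑ i, (2 : ℝ) ^ w i * ‖e i‖ ^ 2)

lemma sqrt_sum_sq_le_weightedNorm [∀ i, Norm (E i)] (w : ι → ℕ) (e : ∀ i, E i) :
    √(∑ i, ‖e i‖ ^ 2) ≤ weightedNorm w e := by
  refine Real.sqrt_le_sqrt (Finset.sum_le_sum fun i _ => ?_)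
  exact le_mul_of_one_le_left (sq_nonneg _) (one_le_pow₀ one_le_two)

lemma weightedNorm_le [∀ i, Norm (E i)] {w : ι → ℕ} {N : ℕ} (hw : ∀ i, w i ≤ N)
    (e : ∀ i, E i) : weightedNorm w e ≤ √(2 ^ N) * √(∑ i, ‖e i‖ ^ 2) := by
  rw [← Real.sqrt_mul (by positivity), Finset.mul_sum]
  refine Real.sqrt_le_sqrt (Finset.sum_le_sum fun i _ => ?_)
  exact mul_le_mul_of_nonneg_right (pow_le_pow_right₀ one_le_two (hw i)) (sq_nonneg _)

lemma weightedNorm_update_zero_le [DecidableEq ι] [∀ i, SeminormedAddGroup (E i)]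
    {w w' : ι → ℕ} (j : ι) (hw : ∀ i ≠ j, w' i + 1 = w i) (e : ∀ i, E i) :
    weightedNorm w' (Function.update e j 0) ≤ √2⁻¹ * weightedNorm w e := by
  rw [weightedNorm, weightedNorm, ← Real.sqrt_mul (by norm_num), Finset.mul_sum]
  refine Real.sqrt_le_sqrt (Finset.sum_le_sum fun i _ => ?_)
  by_cases hij : i = j
  · subst hij
    simp
  · rw [Function.update_of_ne hij, ← hw i hij, pow_succ]
    exact le_of_eq (by ring)

end WeightedNorm

section RoundRobin

variable {l : ℕ} [NeZero l]

/-- Number of steps from time `κ` until node `i` is served, node `κ % l` being served at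
time `κ`. -/
def servingDelay (l : ℕ) (κ : ℕ) (i : Fin l) : ℕ :=
  (((i : ℕ) : ZMod l) - (κ : ZMod l)).val

lemma servingDelay_lt (κ : ℕ) (i : Fin l) : servingDelay l κ i < l :=
  ZMod.val_lt _

lemma servingDelay_succ_add_one {κ : ℕ} {i : Fin l} (hi : (i : ℕ) ≠ κ % l) :
    servingDelay l (κ + 1) i + 1 = servingDelay l κ i := by
  have hne : ((i : ℕ) : ZMod l) - (κ : ZMod l) ≠ 0 := by
    rwa [sub_ne_zero, Ne, ZMod.natCast_eq_natCast_iff', Nat.mod_eq_of_lt i.is_lt]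
  rw [servingDelay, Nat.cast_succ, ← sub_sub]
  exact ZMod.val_sub_one_add_one_of_ne_zero hne

end RoundRobin

/-- for the round-robin protocol (at step κ the block of index
κ mod l is zeroed), there exist ρ ∈ [0,1) and a Lyapunov function W for the
protocol, sandwiched between class-K∞ functions of |e| and contracting at jumps. -/
theorem stmt12 (l : ℕ) (hl : 0 < l)
    (E : Fin l → Type*) [∀ i, NormedAddCommGroup (E i)] :
    ∃ ρ : ℝ, 0 ≤ ρ ∧ ρ < 1 ∧
      ∃ W : ℕ → (∀ i, E i) → ℝ, ∃ α α' : ℝ → ℝ, ClassKInf α ∧ ClassKInf α' ∧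
        (∀ (κ : ℕ) (e : ∀ i, E i),
          α (Real.sqrt (∑ i, ‖e i‖ ^ 2)) ≤ W κ e ∧
            W κ e ≤ α' (Real.sqrt (∑ i, ‖e i‖ ^ 2))) ∧
        ∀ (κ : ℕ) (e : ∀ i, E i),
          W (κ + 1) (Function.update e (⟨κ % l, Nat.mod_lt κ hl⟩ : Fin l) 0) ≤
            ρ * W κ e := by
  have : NeZero l := ⟨hl.ne'⟩
  have hρ : √(2⁻¹ : ℝ) < 1 := by
    rw [Real.sqrt_lt' one_pos]
    norm_num
  refine ⟨√2⁻¹, Real.sqrt_nonneg _, hρ, fun κ => weightedNorm (servingDelay l κ),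
    fun r => 1 * r, fun r => √(2 ^ (l - 1)) * r, classKInf_const_mul one_pos,
    classKInf_const_mul (Real.sqrt_pos.mpr (by positivity)), fun κ e => ⟨?_, ?_⟩, fun κ e => ?_⟩
  · exact (one_mul _).trans_le (sqrt_sum_sq_le_weightedNorm _ e)
  · exact weightedNorm_le (fun i => Nat.le_sub_one_of_lt (servingDelay_lt κ i)) e
  · refine weightedNorm_update_zero_le _ (fun i hi => servingDelay_succ_add_one ?_) e
    exact fun h => hi (Fin.ext h)
end

section
/- Let η solve the ODE η' = −2ηL − η² − G along a flow with L(t) ≤ M/2, G(t) ≤ M for a constant M ≥ 0 (on a compact sublevel set), starting from η(0) = a > 0. Then the function ψ(t) = aρ²/η(t) satisfies ψ' ≤ Mψ + aρ² + (M/(aρ²))ψ² as long as η(t) ≥ aρ² > 0; consequently the time for ψ to increase from ρ² to 1 (equivalently for η to decrease from a to aρ²) is bounded below by a strictly positive constant depending only on M, a, ρ. -/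
/-!
The Riccati right-hand side `-2ηL - η² - G` is nonpositive, so `η` decreases from `η 0 = a` and
stays in `(0, a]`. There it is bounded below by `-(M a + a² + M)`: `η` cannot fall faster than
that, so covering the distance `a (1 - ρ²)` from `a` down to `a ρ²` takes time at least
`a (1 - ρ²) / (M a + a² + M)`. The differential inequality for `ψ = a ρ² / η` is checked term
by term: `2L ≤ M` bounds the linear term and `G ≤ M` the quadratic one.
-/

open Set

theorem image_sub_le_mul_sub_of_hasDerivAt_le {f f' : ℝ → ℝ} {x y C : ℝ}
    (hf : ∀ t ∈ Icc x y, HasDerivAt f (f' t) t) (hf' : ∀ t ∈ Icc x y, f' t ≤ C) (hxy : x ≤ y) :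
    f y - f x ≤ C * (y - x) :=
  (convex_Icc x y).image_sub_le_mul_sub_of_deriv_le
    (fun t ht => (hf t ht).continuousAt.continuousWithinAt)
    (fun t ht => (hf t (interior_subset ht)).differentiableAt.differentiableWithinAt)
    (fun t ht => (hf t (interior_subset ht)).deriv ▸ hf' t (interior_subset ht))
    x (left_mem_Icc.2 hxy) y (right_mem_Icc.2 hxy) hxy

theorem mul_sub_le_image_sub_of_le_hasDerivAt {f f' : ℝ → ℝ} {x y C : ℝ}
    (hf : ∀ t ∈ Icc x y, HasDerivAt f (f' t) t) (hf' : ∀ t ∈ Icc x y, C ≤ f' t) (hxy : x ≤ y) :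
    C * (y - x) ≤ f y - f x :=
  (convex_Icc x y).mul_sub_le_image_sub_of_le_deriv
    (fun t ht => (hf t ht).continuousAt.continuousWithinAt)
    (fun t ht => (hf t (interior_subset ht)).differentiableAt.differentiableWithinAt)
    (fun t ht => (hf t (interior_subset ht)).deriv ▸ hf' t (interior_subset ht))
    x (left_mem_Icc.2 hxy) y (right_mem_Icc.2 hxy) hxy

theorem HasDerivAt.const_div_of_neg {η : ℝ → ℝ} {q t : ℝ} (c : ℝ) (h : HasDerivAt η (-q) t)
    (hη : η t ≠ 0) : HasDerivAt (fun s => c / η s) (c * q / η t ^ 2) t :=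
  ((hasDerivAt_const t c).div h hη).congr_deriv (by ring)

section Riccati

variable {M a η L G : ℝ}

theorem riccati_rhs_nonpos (hη : 0 ≤ η) (hL : 0 ≤ 2 * L) (hG : 0 ≤ G) :
    -2 * η * L - η ^ 2 - G ≤ 0 := by
  nlinarith [mul_nonneg hη hL, sq_nonneg η]

theorem neg_le_riccati_rhs (hM : 0 ≤ M) (hη₀ : 0 ≤ η) (hηa : η ≤ a) (hL : 2 * L ≤ M)
    (hG : G ≤ M) : -(M * a + a ^ 2 + M) ≤ -2 * η * L - η ^ 2 - G := by
  have hlin : η * (2 * L) ≤ a * M :=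
    (mul_le_mul_of_nonneg_left hL hη₀).trans (mul_le_mul_of_nonneg_right hηa hM)
  nlinarith [mul_le_mul hηa hηa hη₀ (hη₀.trans hηa)]

theorem riccati_quotient_le {c : ℝ} (hc : 0 < c) (hη : 0 < η) (hL : 2 * L ≤ M) (hG : G ≤ M) :
    c * (2 * η * L + η ^ 2 + G) / η ^ 2 ≤ M * (c / η) + c + M / c * (c / η) ^ 2 := by
  have split : c * (2 * η * L + η ^ 2 + G) / η ^ 2 = 2 * L * (c / η) + c + G * c / η ^ 2 := by
    field_simp
  have quad : M / c * (c / η) ^ 2 = M * c / η ^ 2 := by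
    field_simp
  rw [split, quad]
  gcongr

end Riccati

/-- for the clock dynamics η' = −2ηL − η² − G with 0 ≤ 2L ≤ M,
0 ≤ G ≤ M, η(0) = a, the function ψ = aρ²/η satisfies
ψ' ≤ Mψ + aρ² + (M/(aρ²))ψ² while η ≥ aρ², and the time for η to decrease from
a to aρ² is lower bounded by a positive constant depending only on M, a, ρ. -/
theorem stmt16 (M a ρ : ℝ) (hM : 0 ≤ M) (ha : 0 < a) (hρ0 : 0 < ρ) (hρ1 : ρ < 1) :
    ∃ τ > (0:ℝ), ∀ (η L G : ℝ → ℝ) (T : ℝ), 0 ≤ T →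
      (∀ t ∈ Set.Icc (0:ℝ) T,
        HasDerivAt η (-2 * η t * L t - η t ^ 2 - G t) t) →
      (∀ t ∈ Set.Icc (0:ℝ) T, 0 ≤ 2 * L t ∧ 2 * L t ≤ M) →
      (∀ t ∈ Set.Icc (0:ℝ) T, 0 ≤ G t ∧ G t ≤ M) →
      η 0 = a →
      (∀ t ∈ Set.Icc (0:ℝ) T, a * ρ ^ 2 ≤ η t) →
      η T = a * ρ ^ 2 →
      (∀ t ∈ Set.Icc (0:ℝ) T,
        HasDerivAt (fun s => a * ρ ^ 2 / η s)
          (a * ρ ^ 2 * (2 * η t * L t + η t ^ 2 + G t) / η t ^ 2) t ∧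
        a * ρ ^ 2 * (2 * η t * L t + η t ^ 2 + G t) / η t ^ 2 ≤
          M * (a * ρ ^ 2 / η t) + a * ρ ^ 2 +
            (M / (a * ρ ^ 2)) * (a * ρ ^ 2 / η t) ^ 2) ∧
      τ ≤ T := by
  have hK : 0 < M * a + a ^ 2 + M := by positivity
  have hρ_sq : ρ ^ 2 < 1 := pow_lt_one₀ hρ0.le hρ1 two_ne_zero
  refine ⟨a * (1 - ρ ^ 2) / (M * a + a ^ 2 + M), div_pos (by nlinarith) hK, ?_⟩
  intro η L G T hT hη' hL hG hη0 hηlb hηT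
  have hc : 0 < a * ρ ^ 2 := by positivity
  have hη_pos : ∀ t ∈ Icc 0 T, 0 < η t := fun t ht => hc.trans_le (hηlb t ht)
  have hη_le : ∀ t ∈ Icc 0 T, η t ≤ a := fun t ht => by
    have hsub : Icc 0 t ⊆ Icc 0 T := Icc_subset_Icc_right ht.2
    have := image_sub_le_mul_sub_of_hasDerivAt_le (fun s hs => hη' s (hsub hs))
      (fun s hs => riccati_rhs_nonpos (hη_pos s (hsub hs)).le (hL s (hsub hs)).1
        (hG s (hsub hs)).1) ht.1
    linarith
  refine ⟨fun t ht => ⟨?_, riccati_quotient_le hc (hη_pos t ht) (hL t ht).2 (hG t ht).2⟩, ?_⟩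
  · exact ((hη' t ht).congr_deriv (by ring)).const_div_of_neg _ (hη_pos t ht).ne'
  · have travel := mul_sub_le_image_sub_of_le_hasDerivAt hη'
      (fun t ht => neg_le_riccati_rhs hM (hη_pos t ht).le (hη_le t ht) (hL t ht).2 (hG t ht).2) hT
    rw [hη0, hηT] at travel
    rw [div_le_iff₀ hK]
    linarith
end
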